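/- For every n ∈ ℕ, the map Q_n is a linear operator on Lip_0(ℓ_1) such that for every Lipschitz f: ℓ_1 → ℝ with f(0)=0: Q_n(f)(0)=0, Q_n(f) is Lipschitz with Lip(Q_n(f)) ≤ Lip(f), and Q_n(f) depends only on the restriction of f to the finite set τ_n(V_n) (i.e., if f and g agree on τ_n(V_n) then Q_n(f) = Q_n(g)); in particular Q_n is a finite-rank bounded linear operator on Lip_0(ℓ_1) of norm at most 1. -/

import Mathlib

noncomputable section

open Filter Topology
open scoped Classical

/-- The sign `±1` associated with a Boolean. -/
def bsgn (b : Bool) : ℝ := if b then 1 else -1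

/-- The hypercube `C(y,R) = {x : max_i |x_i − y_i| ≤ R/2}` with centre `y` and
edge length `R`. -/
def cube {n : ℕ} (y : Fin n → ℝ) (R : ℝ) : Set (Fin n → ℝ) :=
  {x | ∀ i, |x i - y i| ≤ R / 2}

/-- The vertex `A_δ(y,R) = y + (R/2)δ` of the hypercube `C(y,R)`, `δ ∈ {−1,1}^n`. -/
def vertex {n : ℕ} (y : Fin n → ℝ) (R : ℝ) (δ : Fin n → Bool) : Fin n → ℝ :=
  fun i => y i + R / 2 * bsgn (δ i)

/-- A function `Φ` has property (AF) on a (convex) set `B ⊆ ℝ^n` if its restriction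
to every segment contained in `B` and parallel to a coordinate axis is affine. -/
def HasAF {n : ℕ} (B : Set (Fin n → ℝ)) (Φ : (Fin n → ℝ) → ℝ) : Prop :=
  ∀ a b : Fin n → ℝ, a ∈ B → b ∈ B → (∃ i : Fin n, ∀ j, j ≠ i → a j = b j) →
    ∀ t : ℝ, t ∈ Set.Icc (0 : ℝ) 1 →
      Φ (fun j => a j + t * (b j - a j)) = (1 - t) * Φ a + t * Φ b

/-- The coordinatewise-affine interpolation `Λ(f, C(y,R))` of `f` on the hypercube
`C(y,R)`: the unique function with property (AF) on `C(y,R)` agreeing with `f` at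
all `2^n` vertices (written here in its explicit multilinear form). -/
def lam {n : ℕ} (f : (Fin n → ℝ) → ℝ) (y : Fin n → ℝ) (R : ℝ)
    (x : Fin n → ℝ) : ℝ :=
  ∑ δ : Fin n → Bool,
    (∏ i, if δ i then (x i - y i + R / 2) / R else 1 - (x i - y i + R / 2) / R) *
      f (vertex y R δ)

/-- `g` is `L`-Lipschitz on the set `S` with respect to the `ℓ₁`-norm on `ℝ^n`. -/
def LipOnL1 {n : ℕ} (L : ℝ) (S : Set (Fin n → ℝ)) (g : (Fin n → ℝ) → ℝ) : Prop :=
  ∀ x ∈ S, ∀ x' ∈ S, |g x - g x'| ≤ L * ∑ i, |x i - x' i|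
/-- `π_R(t)`: the nearest point to `t` in `[−R/2, R/2]`. -/
def clamp (R t : ℝ) : ℝ := max (-(R / 2)) (min (R / 2) t)

/-- `Π_R^n(x) = (π_R(x_1),…,π_R(x_n))`, the nearest-point retraction onto `C(0,R)`. -/
def clampCube {n : ℕ} (R : ℝ) (x : Fin n → ℝ) : Fin n → ℝ := fun i => clamp R (x i)

/-- The point `x^{ε,y}_{h,k} = y + 2^{−k−1} ε + 2^{−k} (ε_1 h_1, …, ε_n h_n)`. -/
def gridPt {n : ℕ} (ε : Fin n → Bool) (y : Fin n → ℝ) (h : Fin n → ℕ) (k : ℕ) :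
    Fin n → ℝ :=
  fun i => y i + (2 : ℝ) ^ (-(k : ℤ) - 1) * bsgn (ε i) +
    (2 : ℝ) ^ (-(k : ℤ)) * (bsgn (ε i) * (h i : ℝ))

/-- For `v ∈ C(0,2^n)`, an admissible choice of `ε ∈ {−1,1}^n` for a cube
`C(x^{ε,0}_{h,n−1}, 2^{1−n})` of the canonical tiling containing `v`. -/
def epsChoice {n : ℕ} (v : Fin n → ℝ) : Fin n → Bool := fun i => 0 ≤ v i

/-- For `v ∈ C(0,2^n)`, an admissible choice of `h ∈ {0,…,2^{2n−2}−1}^n` for a cube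
`C(x^{ε,0}_{h,n−1}, 2^{1−n})` of the canonical tiling containing `v`. -/
def hChoice (n : ℕ) (v : Fin n → ℝ) : Fin n → ℕ :=
  fun i => min (Int.toNat ⌊|v i| * (2 : ℝ) ^ ((n : ℤ) - 1)⌋) (2 ^ (2 * n - 2) - 1)

/-- The operator `P_n`: `P_n(g)(u) = Λ(g, C(x^{ε,0}_{h,n−1}, 2^{1−n}))(Π_{2^n}^n(u))`,
where `ε ∈ {−1,1}^n` and `h ∈ {0,…,2^{2n−2}−1}^n` are (admissibly) chosen so that
`Π_{2^n}^n(u) ∈ C(x^{ε,0}_{h,n−1}, 2^{1−n})`. -/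
def Pn (n : ℕ) (g : (Fin n → ℝ) → ℝ) (u : Fin n → ℝ) : ℝ :=
  lam g
    (gridPt (epsChoice (clampCube ((2 : ℝ) ^ n) u)) 0
      (hChoice n (clampCube ((2 : ℝ) ^ n) u)) (n - 1))
    ((2 : ℝ) ^ (1 - (n : ℤ)))
    (clampCube ((2 : ℝ) ^ n) u)

/-- The Banach space `ℓ₁` of absolutely summable real sequences. -/
abbrev EllOne : Type := lp (fun _ : ℕ => ℝ) 1

/-- The canonical injection `τ_n : ℓ₁^n → ℓ₁`, `τ_n(x) = (x_1,…,x_n,0,0,…)`. -/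
def tau (n : ℕ) (x : Fin n → ℝ) : EllOne :=
  ⟨fun j => if h : j < n then x ⟨j, h⟩ else 0, by
    refine (memℓp_zero ?_).of_exponent_ge zero_le_one
    refine (Set.finite_Iio n).subset fun j hj => ?_
    simp only [Set.mem_setOf_eq] at hj
    by_contra hc
    simp only [Set.mem_Iio, not_lt] at hc
    exact hj (dif_neg (not_lt.mpr hc))⟩

/-- The canonical projection `ρ_n : ℓ₁ → ℓ₁^n`, `ρ_n(x) = (x_1,…,x_n)`. -/
def rho (n : ℕ) (x : EllOne) : Fin n → ℝ := fun i => x (i : ℕ)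

/-- The operator `Q_n` on `Lip_0(ℓ₁)`: `Q_n(f)(x) = P_n(f ∘ τ_n)(ρ_n(x))`. -/
def Qn (n : ℕ) (f : EllOne → ℝ) (x : EllOne) : ℝ :=
  Pn n (fun u => f (tau n u)) (rho n x)

/-- `V_n`: the set of all vertices of all the cubes `C(x^{ε,0}_{h,n−1}, 2^{1−n})`,
`ε ∈ {−1,1}^n`, `h ∈ {0,…,2^{2n−2}−1}^n`. -/
def Vn (n : ℕ) : Set (Fin n → ℝ) :=
  {v | ∃ (ε : Fin n → Bool) (h : Fin n → ℕ) (δ : Fin n → Bool),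
    (∀ i, h i ≤ 2 ^ (2 * n - 2) - 1) ∧
    v = vertex (gridPt ε 0 h (n - 1)) ((2 : ℝ) ^ (1 - (n : ℤ))) δ}

/-!
On each tile of side `2^{1-n}` of the grid covering the cube `C(0, 2^n)`, `P_n(g)` is the
coordinatewise affine interpolation of `g` at the vertices of the tile. Interpolants on adjacent
tiles agree on their common face, so the tie-breaking choice of tile in `P_n` is immaterial.
Along a coordinate line the interpolant is affine on each tile, with slope a convex combination
of difference quotients of `g` along edges, hence at most `Lip(g)`; gluing the tiles bounds it on
the whole line, and changing one coordinate at a time gives the `ℓ₁`-Lipschitz bound. The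
retraction `Π`, the projection `ρ_n` and the isometry `τ_n` do not increase distances, so
`Lip(Q_n f) ≤ Lip(f)`. Linearity, `Q_n f(0) = f(0)` (the origin is a vertex of a tile) and the
dependence on `V_n` alone are read off the formula.
-/

open Finset Function

section Interpolation

variable {n : ℕ}

def edgeWeight (R c t : ℝ) (b : Bool) : ℝ :=
  if b then (t - c + R / 2) / R else 1 - (t - c + R / 2) / R

lemma lam_eq_sum_prod_edgeWeight (f : (Fin n → ℝ) → ℝ) (y : Fin n → ℝ) (R : ℝ)
    (x : Fin n → ℝ) :
    lam f y R x = ∑ δ : Fin n → Bool, (∏ i, edgeWeight R (y i) (x i) (δ i)) * f (vertex y R δ) :=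
  rfl

lemma edgeWeight_true_add_false (R c t : ℝ) :
    edgeWeight R c t true + edgeWeight R c t false = 1 := by
  simp [edgeWeight]

lemma edgeWeight_nonneg {R c t : ℝ} (hR : 0 < R) (h : |t - c| ≤ R / 2) (b : Bool) :
    0 ≤ edgeWeight R c t b := by
  rw [abs_le] at h
  have h0 : 0 ≤ (t - c + R / 2) / R := div_nonneg (by linarith) hR.le
  have h1 : (t - c + R / 2) / R ≤ 1 := (div_le_one hR).mpr (by linarith)
  cases b <;> simp only [edgeWeight, Bool.false_eq_true, if_true, if_false] <;> linarith

lemma edgeWeight_top {R : ℝ} (hR : R ≠ 0) (c : ℝ) (b : Bool) :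
    edgeWeight R c (c + R / 2) b = if b then 1 else 0 := by
  cases b <;> simp [edgeWeight, hR]

lemma edgeWeight_bot (R c : ℝ) (b : Bool) :
    edgeWeight R c (c - R / 2) b = if b then 0 else 1 := by
  cases b <;> simp [edgeWeight]

lemma sum_prod_edgeWeight (y : Fin n → ℝ) (R : ℝ) (x : Fin n → ℝ) :
    ∑ δ : Fin n → Bool, ∏ i, edgeWeight R (y i) (x i) (δ i) = 1 := by
  rw [← Fintype.prod_sum]
  exact prod_eq_one fun i _ => by
    rw [Fintype.sum_bool, edgeWeight_true_add_false]

lemma lam_lincomb (f g : (Fin n → ℝ) → ℝ) (a b : ℝ) (y : Fin n → ℝ) (R : ℝ)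
    (x : Fin n → ℝ) :
    lam (fun z => a * f z + b * g z) y R x = a * lam f y R x + b * lam g y R x := by
  simp only [lam, mul_sum, ← sum_add_distrib]
  exact sum_congr rfl fun δ _ => by ring

lemma lam_sub (f g : (Fin n → ℝ) → ℝ) (y : Fin n → ℝ) (R : ℝ) (x : Fin n → ℝ) :
    lam (fun z => f z - g z) y R x = lam f y R x - lam g y R x := by
  simp only [lam, ← sum_sub_distrib, mul_sub]

lemma lam_congr {f g : (Fin n → ℝ) → ℝ} {y : Fin n → ℝ} {R : ℝ}
    (h : ∀ δ, f (vertex y R δ) = g (vertex y R δ)) : lam f y R = lam g y R :=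
  funext fun _ => sum_congr rfl fun δ _ => by rw [h δ]

lemma lam_vertex (f : (Fin n → ℝ) → ℝ) (y : Fin n → ℝ) {R : ℝ} (hR : R ≠ 0)
    (δ : Fin n → Bool) : lam f y R (vertex y R δ) = f (vertex y R δ) := by
  have hweight : ∀ i b, edgeWeight R (y i) (vertex y R δ i) b = if b = δ i then 1 else 0 := by
    intro i b
    cases hδ : δ i
    · rw [show vertex y R δ i = y i - R / 2 by simp [vertex, hδ, bsgn]; ring, edgeWeight_bot]
      cases b <;> simp
    · rw [show vertex y R δ i = y i + R / 2 by simp [vertex, hδ, bsgn], edgeWeight_top hR]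
  rw [lam_eq_sum_prod_edgeWeight, sum_eq_single δ]
  · simp [hweight]
  · intro δ' _ hne
    obtain ⟨i, hi⟩ := Function.ne_iff.mp hne
    rw [prod_eq_zero (mem_univ i) (by simp [hweight, hi]), zero_mul]
  · simp

lemma abs_lam_le {f : (Fin n → ℝ) → ℝ} {y x : Fin n → ℝ} {R B : ℝ} (hR : 0 < R)
    (hx : x ∈ cube y R) (hf : ∀ δ, |f (vertex y R δ)| ≤ B) : |lam f y R x| ≤ B := by
  have hw : ∀ δ : Fin n → Bool, 0 ≤ ∏ i, edgeWeight R (y i) (x i) (δ i) :=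
    fun δ => prod_nonneg fun i _ => edgeWeight_nonneg hR (hx i) _
  rw [lam_eq_sum_prod_edgeWeight]
  calc |_|
      ≤ ∑ δ : Fin n → Bool, (∏ i, edgeWeight R (y i) (x i) (δ i)) * B := by
        refine (abs_sum_le_sum_abs _ _).trans (sum_le_sum fun δ _ => ?_)
        rw [abs_mul, abs_of_nonneg (hw δ)]
        exact mul_le_mul_of_nonneg_left (hf δ) (hw δ)
    _ = B := by rw [← sum_mul, sum_prod_edgeWeight, one_mul]

lemma lam_translate (f : (Fin n → ℝ) → ℝ) (y a : Fin n → ℝ) (R : ℝ) (x : Fin n → ℝ) :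
    lam f (y + a) R (x + a) = lam (fun z => f (z + a)) y R x := by
  have hv : ∀ δ, vertex (y + a) R δ = vertex y R δ + a := fun δ => by
    ext i; simp only [vertex, Pi.add_apply]; ring
  simp only [lam, hv, Pi.add_apply, add_sub_add_right_eq_sub]

lemma lam_face (f : (Fin n → ℝ) → ℝ) (y : Fin n → ℝ) {R : ℝ} (hR : R ≠ 0) (x : Fin n → ℝ)
    (i : Fin n) (hx : x i = y i + R / 2) :
    lam f y R x = lam f (update y i (y i + R)) R x := by
  have hflip : Involutive (fun δ : Fin n → Bool => update δ i (!δ i)) := fun δ => by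
    ext j; rcases eq_or_ne j i with rfl | hj <;> simp [*]
  rw [lam_eq_sum_prod_edgeWeight, lam_eq_sum_prod_edgeWeight]
  refine Fintype.sum_equiv hflip.toPerm _ _ fun δ => ?_
  change _ = (∏ j, edgeWeight R (update y i (y i + R) j) (x j) (update δ i (!δ i) j)) *
    f (vertex (update y i (y i + R)) R (update δ i (!δ i)))
  rw [← mul_prod_erase _ _ (mem_univ i), ← mul_prod_erase _ _ (mem_univ i)]
  have hrest : ∏ j ∈ univ.erase i,
      edgeWeight R (update y i (y i + R) j) (x j) (update δ i (!δ i) j) =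
        ∏ j ∈ univ.erase i, edgeWeight R (y j) (x j) (δ j) :=
    prod_congr rfl fun j hj => by simp [ne_of_mem_erase hj]
  have hx' : x i = y i + R - R / 2 := by rw [hx]; ring
  rw [hrest, update_self, update_self, hx', edgeWeight_bot, ← hx', hx, edgeWeight_top hR]
  cases hδ : δ i
  · simp
  · have hv : vertex y R δ = vertex (update y i (y i + R)) R (update δ i false) := by
      ext j
      rcases eq_or_ne j i with rfl | hj
      · simp [vertex, hδ, bsgn]; ring
      · simp [vertex, hj]
    simp [hv]

lemma lam_update_eq (f : (Fin n → ℝ) → ℝ) (y : Fin n → ℝ) {R : ℝ} (hR : R ≠ 0)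
    (x : Fin n → ℝ) (i : Fin n) (t : ℝ) :
    lam f y R (update x i t) = lam f y R (update x i (y i - R / 2)) +
      (t - (y i - R / 2)) / R *
        (lam f y R (update x i (y i + R / 2)) - lam f y R (update x i (y i - R / 2))) := by
  have hsplit : ∀ (s : ℝ) (δ : Fin n → Bool),
      ∏ j, edgeWeight R (y j) (update x i s j) (δ j) =
        edgeWeight R (y i) s (δ i) * ∏ j ∈ univ.erase i, edgeWeight R (y j) (x j) (δ j) := by
    intro s δ
    rw [← mul_prod_erase _ _ (mem_univ i), update_self]
    congr 1
    exact prod_congr rfl fun j hj => by rw [update_of_ne (ne_of_mem_erase hj)]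
  simp only [lam_eq_sum_prod_edgeWeight, hsplit, edgeWeight_top hR, edgeWeight_bot, mul_sum,
    ← sum_sub_distrib, ← sum_add_distrib]
  refine sum_congr rfl fun δ _ => ?_
  cases δ i <;> simp only [edgeWeight, Bool.false_eq_true, if_true, if_false] <;> ring

lemma abs_lam_update_top_sub_bot_le (f : (Fin n → ℝ) → ℝ) (y : Fin n → ℝ) {R : ℝ} (hR : 0 < R)
    {x : Fin n → ℝ} {i : Fin n} {B : ℝ} (hx : ∀ j ≠ i, |x j - y j| ≤ R / 2)
    (hf : ∀ δ, |f (vertex y R δ + Pi.single i R) - f (vertex y R δ)| ≤ B) :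
    |lam f y R (update x i (y i + R / 2)) - lam f y R (update x i (y i - R / 2))| ≤ B := by
  set x₀ := update x i (y i - R / 2)
  -- The top face of the cube is the bottom face of the cube translated by `R • eᵢ`.
  have htop : lam f y R (update x i (y i + R / 2)) =
      lam (fun z => f (z + Pi.single i R)) y R x₀ := by
    rw [lam_face f y hR.ne' _ i (by simp), ← lam_translate]
    congr 1
    · ext j; rcases eq_or_ne j i with rfl | hj <;> simp [*]
    · ext j; rcases eq_or_ne j i with rfl | hj <;> simp [x₀, *]; ring
  rw [htop, ← lam_sub]
  refine abs_lam_le hR (fun j => ?_) hf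
  rcases eq_or_ne j i with rfl | hj
  · simp [x₀, abs_of_pos (half_pos hR)]
  · simp [x₀, hj, hx j hj]

lemma abs_lam_update_sub_update_le (f : (Fin n → ℝ) → ℝ) (y : Fin n → ℝ) {R : ℝ} (hR : 0 < R)
    {x : Fin n → ℝ} {i : Fin n} {K : ℝ} (hx : ∀ j ≠ i, |x j - y j| ≤ R / 2)
    (hf : ∀ δ, |f (vertex y R δ + Pi.single i R) - f (vertex y R δ)| ≤ K * R) (t t' : ℝ) :
    |lam f y R (update x i t) - lam f y R (update x i t')| ≤ K * |t - t'| := by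
  rw [lam_update_eq f y hR.ne' x i t, lam_update_eq f y hR.ne' x i t', add_sub_add_left_eq_sub,
    ← sub_mul, ← sub_div, sub_sub_sub_cancel_right, abs_mul, abs_div, abs_of_pos hR]
  calc |t - t'| / R * |lam f y R (update x i (y i + R / 2)) - lam f y R (update x i (y i - R / 2))|
      ≤ |t - t'| / R * (K * R) :=
        mul_le_mul_of_nonneg_left (abs_lam_update_top_sub_bot_le f y hR hx hf) (by positivity)
    _ = K * |t - t'| := by field_simp

lemma lam_update_grid_center_eq (f : (Fin n → ℝ) → ℝ) (y : Fin n → ℝ) {R : ℝ} (hR : 0 < R)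
    {x : Fin n → ℝ} {i : Fin n} {k k' : ℤ} (hk : |x i - (R * k + R / 2)| ≤ R / 2)
    (hk' : |x i - (R * k' + R / 2)| ≤ R / 2) :
    lam f (update y i (R * k + R / 2)) R x = lam f (update y i (R * k' + R / 2)) R x := by
  wlog hle : k ≤ k' generalizing k k'
  · exact (this hk' hk (le_of_not_ge hle)).symm
  rw [abs_le] at hk hk'
  have hk1 : (k' : ℝ) ≤ k + 1 := by nlinarith
  obtain rfl | rfl : k' = k ∨ k' = k + 1 := by
    have : k' ≤ k + 1 := by exact_mod_cast hk1
    omega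
  · rfl
  · have hx : x i = R * k + R / 2 + R / 2 := by push_cast at hk'; linarith
    rw [lam_face f _ hR.ne' x i (by rw [update_self, hx]), update_idem, update_self]
    push_cast
    ring_nf

end Interpolation

lemma abs_sub_le_of_grid_cells {φ : ℝ → ℝ} {K R : ℝ} {S : Set ℝ} (hR : 0 < R)
    (hS : S.OrdConnected)
    (hcell : ∀ j : ℤ, ∀ s ∈ S ∩ Set.Icc (R * j) (R * (j + 1)),
      ∀ s' ∈ S ∩ Set.Icc (R * j) (R * (j + 1)), |φ s - φ s'| ≤ K * |s - s'|)
    {s s' : ℝ} (hs : s ∈ S) (hs' : s' ∈ S) : |φ s - φ s'| ≤ K * |s - s'| := by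
  wlog hle : s ≤ s' generalizing s s'
  · rw [abs_sub_comm, abs_sub_comm s]
    exact this hs' hs (le_of_not_ge hle)
  have hcell_floor : ∀ u, u ∈ Set.Icc (R * ⌊u / R⌋) (R * (⌊u / R⌋ + 1)) := fun u =>
    ⟨(le_div_iff₀' hR).mp (Int.floor_le _), (div_le_iff₀' hR).mp (Int.lt_floor_add_one _).le⟩
  have hsame : ∀ s ∈ S, s ≤ s' → ⌊s' / R⌋ ≤ ⌊s / R⌋ → |φ s - φ s'| ≤ K * (s' - s) := by
    intro s hs hle hfl
    have hfl' : ⌊s' / R⌋ = ⌊s / R⌋ :=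
      hfl.antisymm (Int.floor_le_floor (div_le_div_of_nonneg_right hle hR.le))
    have h := hcell ⌊s / R⌋ s ⟨hs, hcell_floor s⟩ s' ⟨hs', hfl' ▸ hcell_floor s'⟩
    rwa [abs_of_nonpos (sub_nonpos.mpr hle), neg_sub] at h
  suffices key : ∀ N : ℕ, ∀ s ∈ S, s ≤ s' → ⌊s' / R⌋ - ⌊s / R⌋ ≤ N →
      |φ s - φ s'| ≤ K * (s' - s) by
    rw [abs_of_nonpos (sub_nonpos.mpr hle), neg_sub]
    exact key _ s hs hle (Int.self_le_toNat _)
  intro N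
  induction N with
  | zero => exact fun s hs hle hN => hsame s hs hle (by omega)
  | succ N ih =>
    intro s hs hle hN
    by_cases hfl : ⌊s' / R⌋ ≤ ⌊s / R⌋
    · exact hsame s hs hle hfl
    set p := R * (⌊s / R⌋ + 1)
    have hfl_p : ⌊p / R⌋ = ⌊s / R⌋ + 1 := by
      rw [mul_div_cancel_left₀ _ hR.ne']
      exact_mod_cast Int.floor_intCast _
    have hsp : s ≤ p := (hcell_floor s).2
    have hps' : p ≤ s' := by
      calc p ≤ R * ⌊s' / R⌋ := mul_le_mul_of_nonneg_left (by exact_mod_cast not_le.mp hfl) hR.le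
        _ ≤ s' := (hcell_floor s').1
    have hp : p ∈ S := hS.out hs hs' ⟨hsp, hps'⟩
    have hsp_cell : |φ s - φ p| ≤ K * (p - s) := by
      have h := hcell ⌊s / R⌋ s ⟨hs, hcell_floor s⟩ p ⟨hp, (hcell_floor s).1.trans hsp, le_rfl⟩
      rwa [abs_of_nonpos (sub_nonpos.mpr hsp), neg_sub] at h
    calc |φ s - φ s'| ≤ |φ s - φ p| + |φ p - φ s'| := abs_sub_le _ _ _
      _ ≤ K * (p - s) + K * (s' - p) := add_le_add hsp_cell (ih p hp hps' (by omega))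
      _ = K * (s' - s) := by ring

lemma abs_sub_le_sum_of_abs_update_sub_le {ι : Type*} [Fintype ι] [DecidableEq ι]
    {F : (ι → ℝ) → ℝ} {K : ℝ} {S : ι → Set ℝ}
    (hF : ∀ v ∈ Set.univ.pi S, ∀ i, ∀ t ∈ S i, |F v - F (update v i t)| ≤ K * |v i - t|)
    {v v' : ι → ℝ} (hv : v ∈ Set.univ.pi S) (hv' : v' ∈ Set.univ.pi S) :
    |F v - F v'| ≤ K * ∑ i, |v i - v' i| := by
  rw [Set.mem_univ_pi] at hv'
  suffices key : ∀ s : Finset ι, ∀ v ∈ Set.univ.pi S, (∀ j ∉ s, v j = v' j) →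
      |F v - F v'| ≤ K * ∑ j ∈ s, |v j - v' j| from key univ v hv (by simp)
  intro s
  induction s using Finset.induction_on with
  | empty =>
    intro v _ hagree
    rw [funext fun j => hagree j (notMem_empty j)]
    simp
  | insert i s hi ih =>
    intro v hv hagree
    set w := update v i (v' i)
    have hw : w ∈ Set.univ.pi S := by
      rw [Set.mem_univ_pi] at hv ⊢
      intro j
      rcases eq_or_ne j i with rfl | hj
      · simpa [w] using hv' j
      · simpa [w, hj] using hv j
    have hw_agree : ∀ j ∉ s, w j = v' j := by
      intro j hj
      rcases eq_or_ne j i with rfl | hji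
      · simp [w]
      · simpa [w, hji] using hagree j (by simp [hj, hji])
    have hsum : ∑ j ∈ s, |w j - v' j| = ∑ j ∈ s, |v j - v' j| :=
      sum_congr rfl fun j hj => by simp [w, ne_of_mem_of_not_mem hj hi]
    calc |F v - F v'| ≤ |F v - F w| + |F w - F v'| := abs_sub_le _ _ _
      _ ≤ K * |v i - v' i| + K * ∑ j ∈ s, |v j - v' j| :=
        add_le_add (hF v hv i _ (hv' i)) (hsum ▸ ih w hw hw_agree)
      _ = K * ∑ j ∈ insert i s, |v j - v' j| := by rw [sum_insert hi]; ring

lemma mul_min_floor_toNat_bounds {R s : ℝ} {N : ℕ} (hR : 0 < R) (hN : 0 < N) (hs : 0 ≤ s)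
    (hsN : s ≤ R * N) :
    R * (min ⌊s / R⌋.toNat (N - 1) : ℕ) ≤ s ∧ s ≤ R * ((min ⌊s / R⌋.toNat (N - 1) : ℕ) + 1) := by
  have hfl0 : 0 ≤ ⌊s / R⌋ := Int.floor_nonneg.mpr (div_nonneg hs hR.le)
  have hcast : (⌊s / R⌋.toNat : ℝ) = ⌊s / R⌋ := by exact_mod_cast Int.toNat_of_nonneg hfl0
  have hfl : (⌊s / R⌋.toNat : ℝ) ≤ s / R := hcast ▸ Int.floor_le _
  rcases le_total ⌊s / R⌋.toNat (N - 1) with hle | hle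
  · rw [min_eq_left hle, ← le_div_iff₀' hR, ← div_le_iff₀' hR, hcast]
    exact ⟨Int.floor_le _, (Int.lt_floor_add_one _).le⟩
  · rw [min_eq_right hle]
    refine ⟨(le_div_iff₀' hR).mp ((Nat.cast_le.mpr hle).trans hfl), ?_⟩
    rwa [Nat.cast_sub hN, Nat.cast_one, sub_add_cancel]

section Tiling

variable {n : ℕ}

def tileSide (n : ℕ) : ℝ := 2 ^ (1 - (n : ℤ))

lemma tileSide_pos (n : ℕ) : 0 < tileSide n := by
  unfold tileSide
  positivity

lemma two_zpow_sub_one_eq_tileSide_inv (n : ℕ) : (2 : ℝ) ^ ((n : ℤ) - 1) = (tileSide n)⁻¹ := by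
  rw [tileSide, ← zpow_neg, neg_sub]

lemma tileSide_mul_two_pow (hn : 0 < n) :
    tileSide n * ((2 ^ (2 * n - 2) : ℕ) : ℝ) = 2 ^ ((n : ℤ) - 1) := by
  rw [tileSide, Nat.cast_pow, Nat.cast_ofNat, ← zpow_natCast, ← zpow_add₀ two_ne_zero]
  congr 1
  omega

def tileIndex (n : ℕ) (t : ℝ) : ℕ :=
  min (Int.toNat ⌊|t| * (2 : ℝ) ^ ((n : ℤ) - 1)⌋) (2 ^ (2 * n - 2) - 1)

def tileCenter (n : ℕ) (t : ℝ) : ℝ :=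
  bsgn (decide (0 ≤ t)) * (tileSide n * tileIndex n t + tileSide n / 2)

lemma gridPt_epsChoice_hChoice (hn : 0 < n) (v : Fin n → ℝ) :
    gridPt (epsChoice v) 0 (hChoice n v) (n - 1) = tileCenter n ∘ v := by
  have hR : (2 : ℝ) ^ (-((n - 1 : ℕ) : ℤ)) = tileSide n := by rw [tileSide]; congr 1; omega
  have hR2 : (2 : ℝ) ^ (-((n - 1 : ℕ) : ℤ) - 1) = tileSide n / 2 := by
    rw [zpow_sub_one₀ two_ne_zero, hR, div_eq_mul_inv]
  ext i
  simp only [gridPt, hR, hR2, comp_apply, tileCenter, epsChoice, hChoice, tileIndex, Pi.zero_apply]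
  ring

lemma tileIndex_bounds (hn : 0 < n) {t : ℝ} (ht : |t| ≤ 2 ^ ((n : ℤ) - 1)) :
    tileSide n * tileIndex n t ≤ |t| ∧
      |t| ≤ tileSide n * (tileIndex n t + 1) := by
  rw [← tileSide_mul_two_pow hn] at ht
  have h := mul_min_floor_toNat_bounds (tileSide_pos n) (by positivity) (abs_nonneg t) ht
  rwa [div_eq_mul_inv, ← two_zpow_sub_one_eq_tileSide_inv] at h

lemma abs_sub_tileCenter_le (hn : 0 < n) {t : ℝ} (ht : |t| ≤ 2 ^ ((n : ℤ) - 1)) :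
    |t - tileCenter n t| ≤ tileSide n / 2 := by
  have h := tileIndex_bounds hn ht
  have hsign : t - tileCenter n t = bsgn (decide (0 ≤ t)) *
      (|t| - (tileSide n * tileIndex n t + tileSide n / 2)) := by
    rcases le_or_gt 0 t with h0 | h0
    · simp [tileCenter, bsgn, h0, abs_of_nonneg h0]
    · simp [tileCenter, bsgn, not_le.mpr h0, abs_of_neg h0]; ring
  have hσ : |bsgn (decide (0 ≤ t))| = 1 := by unfold bsgn; split <;> simp
  rw [hsign, abs_mul, hσ, one_mul, abs_le]
  constructor <;> linarith

lemma tileCenter_mem_grid (n : ℕ) (t : ℝ) :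
    ∃ k : ℤ, tileCenter n t = tileSide n * k + tileSide n / 2 := by
  rcases le_or_gt 0 t with h0 | h0
  · exact ⟨tileIndex n t, by simp [tileCenter, bsgn, h0]⟩
  · exact ⟨-tileIndex n t - 1, by simp [tileCenter, bsgn, not_le.mpr h0]; ring⟩

lemma tileCenter_zero (n : ℕ) : tileCenter n 0 = tileSide n / 2 := by
  simp [tileCenter, tileIndex, bsgn]

end Tiling

section TiledInterpolation

variable {n : ℕ}

def tiledInterp (n : ℕ) (g : (Fin n → ℝ) → ℝ) (v : Fin n → ℝ) : ℝ :=
  lam g (tileCenter n ∘ v) (tileSide n) v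

lemma tiledInterp_update_eq_lam (hn : 0 < n) (g : (Fin n → ℝ) → ℝ) (v : Fin n → ℝ) (i : Fin n)
    {j : ℤ} {s : ℝ} (hs : |s| ≤ 2 ^ ((n : ℤ) - 1))
    (hsj : s ∈ Set.Icc (tileSide n * j) (tileSide n * (j + 1))) :
    tiledInterp n g (update v i s) =
      lam g (update (tileCenter n ∘ v) i (tileSide n * j + tileSide n / 2))
        (tileSide n) (update v i s) := by
  -- The tile selected at `s` can differ from the cell `j` only when `s` lies on a face of
  -- both, where their interpolants agree.
  obtain ⟨k, hk⟩ := tileCenter_mem_grid n s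
  have hsk := abs_sub_tileCenter_le hn hs
  rw [tiledInterp, comp_update, hk]
  rw [hk] at hsk
  refine lam_update_grid_center_eq g _ (tileSide_pos n) (by simpa using hsk) ?_
  rw [update_self, abs_le]
  constructor <;> linarith [hsj.1, hsj.2]

lemma abs_tiledInterp_update_sub_update_le_of_mem_cell (hn : 0 < n) {g : (Fin n → ℝ) → ℝ} {K : ℝ}
    (hg : ∀ a b, |g a - g b| ≤ K * ∑ i, |a i - b i|) {v : Fin n → ℝ}
    (hv : ∀ j, |v j| ≤ 2 ^ ((n : ℤ) - 1)) (i : Fin n) {j : ℤ} {s s' : ℝ}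
    (hs : |s| ≤ 2 ^ ((n : ℤ) - 1)) (hs' : |s'| ≤ 2 ^ ((n : ℤ) - 1))
    (hsj : s ∈ Set.Icc (tileSide n * j) (tileSide n * (j + 1)))
    (hs'j : s' ∈ Set.Icc (tileSide n * j) (tileSide n * (j + 1))) :
    |tiledInterp n g (update v i s) - tiledInterp n g (update v i s')| ≤ K * |s - s'| := by
  have hR := tileSide_pos n
  rw [tiledInterp_update_eq_lam hn g v i hs hsj, tiledInterp_update_eq_lam hn g v i hs' hs'j]
  refine abs_lam_update_sub_update_le g _ hR (fun j' hj' => ?_) (fun δ => ?_) s s'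
  · rw [update_of_ne hj', comp_apply]
    exact abs_sub_tileCenter_le hn (hv j')
  · refine (hg _ _).trans_eq ?_
    simp [Pi.single_apply, apply_ite (abs : ℝ → ℝ), abs_of_pos hR]

lemma abs_tiledInterp_sub_update_le (hn : 0 < n) {g : (Fin n → ℝ) → ℝ} {K : ℝ}
    (hg : ∀ a b, |g a - g b| ≤ K * ∑ i, |a i - b i|) {v : Fin n → ℝ}
    (hv : ∀ j, |v j| ≤ 2 ^ ((n : ℤ) - 1)) (i : Fin n) {t : ℝ} (ht : |t| ≤ 2 ^ ((n : ℤ) - 1)) :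
    |tiledInterp n g v - tiledInterp n g (update v i t)| ≤ K * |v i - t| := by
  have h := abs_sub_le_of_grid_cells (φ := fun s => tiledInterp n g (update v i s))
    (tileSide_pos n) Set.ordConnected_Icc
    (fun j s hs s' hs' => abs_tiledInterp_update_sub_update_le_of_mem_cell hn hg hv i
      (abs_le.mpr hs.1) (abs_le.mpr hs'.1) hs.2 hs'.2)
    (abs_le.mp (hv i)) (abs_le.mp ht)
  rwa [update_eq_self] at h

lemma abs_tiledInterp_sub_le (hn : 0 < n) {g : (Fin n → ℝ) → ℝ} {K : ℝ}
    (hg : ∀ a b, |g a - g b| ≤ K * ∑ i, |a i - b i|) {v v' : Fin n → ℝ}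
    (hv : ∀ j, |v j| ≤ 2 ^ ((n : ℤ) - 1)) (hv' : ∀ j, |v' j| ≤ 2 ^ ((n : ℤ) - 1)) :
    |tiledInterp n g v - tiledInterp n g v'| ≤ K * ∑ i, |v i - v' i| := by
  have hbox : ∀ {w : Fin n → ℝ}, (∀ j, |w j| ≤ 2 ^ ((n : ℤ) - 1)) ↔
      w ∈ Set.univ.pi fun _ => Set.Icc (-2 ^ ((n : ℤ) - 1)) (2 ^ ((n : ℤ) - 1)) := by
    simp only [Set.mem_univ_pi, Set.mem_Icc, abs_le, implies_true]
  refine abs_sub_le_sum_of_abs_update_sub_le (fun w hw i t ht => ?_) (hbox.mp hv) (hbox.mp hv')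
  exact abs_tiledInterp_sub_update_le hn hg (hbox.mpr hw) i (abs_le.mpr ht)

end TiledInterpolation

section Pn

variable {n : ℕ}

lemma clamp_eq_projIcc {R : ℝ} (hR : 0 ≤ R) (t : ℝ) :
    clamp R t = Set.projIcc (-(R / 2)) (R / 2) (by linarith) t :=
  rfl

lemma abs_clamp_le {R : ℝ} (hR : 0 ≤ R) (t : ℝ) : |clamp R t| ≤ R / 2 :=
  abs_le.mpr (clamp_eq_projIcc hR t ▸ (Set.projIcc _ _ _ t).2)

lemma abs_clamp_sub_clamp_le {R : ℝ} (hR : 0 ≤ R) (a b : ℝ) :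
    |clamp R a - clamp R b| ≤ |a - b| := by
  rw [clamp_eq_projIcc hR, clamp_eq_projIcc hR]
  exact Set.abs_projIcc_sub_projIcc _

lemma Pn_eq_tiledInterp (hn : 0 < n) (g : (Fin n → ℝ) → ℝ) (u : Fin n → ℝ) :
    Pn n g u = tiledInterp n g (clampCube (2 ^ n) u) := by
  rw [Pn, gridPt_epsChoice_hChoice hn, tiledInterp, tileSide]

lemma abs_Pn_sub_le (hn : 0 < n) {g : (Fin n → ℝ) → ℝ} {K : ℝ}
    (hg : ∀ a b, |g a - g b| ≤ K * ∑ i, |a i - b i|) (hK : 0 ≤ K) (u u' : Fin n → ℝ) :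
    |Pn n g u - Pn n g u'| ≤ K * ∑ i, |u i - u' i| := by
  have hbox : ∀ (w : Fin n → ℝ) j, |clampCube (2 ^ n) w j| ≤ 2 ^ ((n : ℤ) - 1) := fun w j => by
    rw [zpow_sub_one₀ two_ne_zero, zpow_natCast, ← div_eq_mul_inv]
    exact abs_clamp_le (by positivity) _
  rw [Pn_eq_tiledInterp hn, Pn_eq_tiledInterp hn]
  refine (abs_tiledInterp_sub_le hn hg (hbox u) (hbox u')).trans ?_
  exact mul_le_mul_of_nonneg_left
    (sum_le_sum fun i _ => abs_clamp_sub_clamp_le (by positivity) _ _) hK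

lemma Pn_zero (hn : 0 < n) (g : (Fin n → ℝ) → ℝ) : Pn n g 0 = g 0 := by
  have hR := tileSide_pos n
  have hclamp : clampCube (2 ^ n) (0 : Fin n → ℝ) = 0 := by
    ext i
    simp only [clampCube, clamp, Pi.zero_apply]
    rw [min_eq_right (by positivity), max_eq_right (neg_nonpos.mpr (by positivity))]
  have hvertex : (0 : Fin n → ℝ) =
      vertex (fun _ => tileSide n / 2) (tileSide n) fun _ => false := by
    ext i
    simp [vertex, bsgn]
  rw [Pn_eq_tiledInterp hn, hclamp, tiledInterp]
  have hcenter : tileCenter n ∘ (0 : Fin n → ℝ) = fun _ => tileSide n / 2 :=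
    funext fun _ => tileCenter_zero n
  rw [hcenter, hvertex, lam_vertex g _ hR.ne']

lemma Pn_lincomb (g₁ g₂ : (Fin n → ℝ) → ℝ) (a b : ℝ) (u : Fin n → ℝ) :
    Pn n (fun v => a * g₁ v + b * g₂ v) u = a * Pn n g₁ u + b * Pn n g₂ u :=
  lam_lincomb g₁ g₂ a b _ _ _

lemma Pn_congr {g₁ g₂ : (Fin n → ℝ) → ℝ} (h : ∀ v ∈ Vn n, g₁ v = g₂ v) : Pn n g₁ = Pn n g₂ :=
  funext fun _ => congrFun (lam_congr fun δ => h _ ⟨_, _, δ, fun _ => min_le_right _ _, rfl⟩) _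

end Pn

section EllOne

variable {n : ℕ}

lemma tau_apply (z : Fin n → ℝ) (j : ℕ) : tau n z j = if h : j < n then z ⟨j, h⟩ else 0 :=
  rfl

lemma tau_sub (a b : Fin n → ℝ) : tau n a - tau n b = tau n (a - b) := by
  ext j
  simp only [lp.coeFn_sub, Pi.sub_apply, tau_apply]
  split <;> simp

lemma tau_zero : tau n 0 = 0 := by
  ext j
  simp [tau_apply]

lemma norm_tau (z : Fin n → ℝ) : ‖tau n z‖ = ∑ i, |z i| := by
  have h := lp.norm_rpow_eq_tsum (p := 1) (by norm_num) (tau n z)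
  simp only [ENNReal.toReal_one, Real.rpow_one] at h
  rw [h, tsum_eq_sum (s := range n) fun j hj => by simp [tau_apply, not_lt.mp (by simpa using hj)],
    ← Fin.sum_univ_eq_sum_range]
  simp [tau_apply]

lemma rho_zero : rho n 0 = 0 :=
  rfl

lemma sum_abs_rho_sub_le_norm (x y : EllOne) : ∑ i, |rho n x i - rho n y i| ≤ ‖x - y‖ := by
  have h := lp.sum_rpow_le_norm_rpow (p := 1) (by norm_num) (x - y) (range n)
  simp only [ENNReal.toReal_one, Real.rpow_one, lp.coeFn_sub, Pi.sub_apply, Real.norm_eq_abs] at h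
  rwa [← Fin.sum_univ_eq_sum_range (fun j => |x j - y j|)] at h

lemma LipschitzWith.abs_comp_tau_sub_le {f : EllOne → ℝ} {K : NNReal} (hf : LipschitzWith K f)
    (a b : Fin n → ℝ) : |f (tau n a) - f (tau n b)| ≤ K * ∑ i, |a i - b i| := by
  simpa [Real.dist_eq, dist_eq_norm, tau_sub, norm_tau] using hf.dist_le_mul (tau n a) (tau n b)

end EllOne

open scoped NNReal

/-- **Statement 10.** `Q_n` is a linear operator on `Lip_0(ℓ₁)`; for every Lipschitz
`f : ℓ₁ → ℝ` with `f(0) = 0` one has `Q_n(f)(0) = 0`, `Lip(Q_n f) ≤ Lip(f)`, and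
`Q_n(f)` only depends on the restriction of `f` to the finite set `τ_n(V_n)`.
(In particular `Q_n` is a finite-rank bounded linear operator of norm at most `1`.) -/
theorem Qn_properties (n : ℕ) (hn : 0 < n) :
    -- `Q_n` is linear (on `Lip_0(ℓ₁)`)
    (∀ (f g : EllOne → ℝ), (∃ K : ℝ≥0, LipschitzWith K f) →
      (∃ K : ℝ≥0, LipschitzWith K g) → f 0 = 0 → g 0 = 0 → ∀ a b : ℝ,
      Qn n (fun x => a * f x + b * g x) = fun x => a * Qn n f x + b * Qn n g x) ∧
    (∀ f : EllOne → ℝ, (∃ K : ℝ≥0, LipschitzWith K f) → f 0 = 0 →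
      -- `Q_n(f)(0) = 0`
      (Qn n f 0 = 0) ∧
      -- `Lip(Q_n(f)) ≤ Lip(f)`
      (∀ K : ℝ≥0, LipschitzWith K f → LipschitzWith K (Qn n f)) ∧
      -- `Q_n(f)` depends only on the values of `f` on the finite set `τ_n(V_n)`
      (∀ g : EllOne → ℝ, (∃ K : ℝ≥0, LipschitzWith K g) → g 0 = 0 →
        (∀ v ∈ Vn n, f (tau n v) = g (tau n v)) → Qn n f = Qn n g)) := by
  refine ⟨fun f g _ _ _ _ a b => funext fun x => Pn_lincomb _ _ a b _,
    fun f _ hf0 => ⟨?_, fun K hK => ?_, fun g _ _ hfg => ?_⟩⟩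
  · rw [Qn, rho_zero, Pn_zero hn, tau_zero, hf0]
  · refine LipschitzWith.of_dist_le_mul fun x y => ?_
    rw [Real.dist_eq, dist_eq_norm]
    calc |Qn n f x - Qn n f y| ≤ K * ∑ i, |rho n x i - rho n y i| :=
          abs_Pn_sub_le hn hK.abs_comp_tau_sub_le K.coe_nonneg _ _
      _ ≤ K * ‖x - y‖ := mul_le_mul_of_nonneg_left (sum_abs_rho_sub_le_norm x y) K.coe_nonneg
  · exact funext fun x => congrFun (Pn_congr hfg) (rho n x)
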